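/- Global error representation (intermediate identity in the proof of Theorem 3.2). Assume ψ : ℝ → E is twice differentiable with derivative φ and second derivative σ, that ψ, φ satisfy the one-step Duhamel relations ψ(t_{k+1}) = cos(hG) ψ(t_k) + G⁻¹ sin(hG) φ(t_k) + ∫₀ʰ G⁻¹ sin((h−τ)G)(m(t_k+τ)(ψ(t_k+τ))) dτ and φ(t_{k+1}) = −G sin(hG) ψ(t_k) + cos(hG) φ(t_k) + ∫₀ʰ cos((h−τ)G)(m(t_k+τ)(ψ(t_k+τ))) dτ for 0 ≤ k ≤ K−1, and let (ψ_k, ψ'_k) be the scheme Ξ^{[3]} started from ψ₀ := ψ(t₀), ψ'₀ := φ(t₀), ψ''₀ := σ(t₀). Define ε_k := ψ(t_k) − ψ_k, ε'_k := φ(t_k) − ψ'_k (so ε₀ = ε'₀ = 0; also set ε'_{−1} := 0), the Taylor defects E_l(τ) := ψ(t_l+τ) − ψ(t_l) − τ φ(t_l) − (τ²/2) σ(t_l), and \bar{E}₀ := 0, \bar{E}_l := σ(t_l) − (φ(t_l) − φ(t_{l−1}))/h for l ≥ 1. Then for every 1 ≤ k ≤ K: ε_k = Σ_{l=0}^{k−1}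 ∫₀ʰ G⁻¹ sin(((k−l)h−τ)G) (m(t_l+τ)(ε_l + τ(1 + τ/(2h)) ε'_l − (τ²/(2h)) ε'_{l−1} + (τ²/2) \bar{E}_l + E_l(τ))) dτ, and ε'_k = Σ_{l=0}^{k−1} ∫₀ʰ cos(((k−l)h−τ)G) (m(t_l+τ)(ε_l + τ(1 + τ/(2h)) ε'_l − (τ²/(2h)) ε'_{l−1} + (τ²/2) \bar{E}_l + E_l(τ))) dτ. -/

import Mathlib

/-- `cos(tG) := (exp(itG) + exp(−itG))/2` in a complex unital Banach algebra. -/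
noncomputable def opCos {A : Type*} [NormedRing A] [NormedAlgebra ℂ A] (t : ℝ) (G : A) : A :=
  (2 : ℂ)⁻¹ • (NormedSpace.exp (((t : ℂ) * Complex.I) • G) +
    NormedSpace.exp ((-(t : ℂ) * Complex.I) • G))

/-- `sin(tG) := (exp(itG) − exp(−itG))/(2i)` in a complex unital Banach algebra. -/
noncomputable def opSin {A : Type*} [NormedRing A] [NormedAlgebra ℂ A] (t : ℝ) (G : A) : A :=
  (2 * Complex.I)⁻¹ • (NormedSpace.exp (((t : ℂ) * Complex.I) • G) -
    NormedSpace.exp ((-(t : ℂ) * Complex.I) • G))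

/-!
Subtracting the scheme from the exact Duhamel relations shows that the errors `(ε_k, ε'_k)` obey
the same one-step recursion as the exact solution, with zero initial data and forcing
`m(t_l + τ)(ψ(t_l + τ) - p_l(τ))`, where `p_l` is the polynomial in `τ` that the scheme substitutes
for `ψ(t_l + τ)`; expanding `ψ(t_l + τ) - p_l(τ)` gives the stated combination of `ε_l`, `ε'_l`,
`ε'_{l-1}`, `Ē_l` and `E_l(τ)`. Unrolling the recursion only uses that the propagator
`[[cos tG, G⁻¹ sin tG], [-G sin tG, cos tG]]` is a one-parameter group, i.e. the addition formulas
for `cos` and `sin`, which follow from `exp(isG) exp(itG) = exp(i(s+t)G)`.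
-/

section OperatorTrigonometry

variable {A : Type*} [NormedRing A] [NormedAlgebra ℂ A]

noncomputable def expI (G : A) (t : ℝ) : A := NormedSpace.exp (((t : ℂ) * Complex.I) • G)

lemma expI_mul_expI [CompleteSpace A] (G : A) (s t : ℝ) :
    expI G s * expI G t = expI G (s + t) := by
  let : NormedAlgebra ℚ A := .restrictScalars ℚ ℂ A
  rw [expI, expI, expI, ← NormedSpace.exp_add_of_commute
    (((Commute.refl G).smul_left _).smul_right _), ← add_smul]
  push_cast
  ring_nf

lemma opCos_eq_expI (t : ℝ) (G : A) : opCos t G = (2 : ℂ)⁻¹ • (expI G t + expI G (-t)) := by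
  simp [opCos, expI]

lemma opSin_eq_expI (t : ℝ) (G : A) :
    opSin t G = (2 * Complex.I)⁻¹ • (expI G t - expI G (-t)) := by
  simp [opSin, expI]

lemma opSin_add [CompleteSpace A] (s t : ℝ) (G : A) :
    opSin (s + t) G = opSin s G * opCos t G + opCos s G * opSin t G := by
  simp only [opSin_eq_expI, opCos_eq_expI, smul_mul_smul_comm, sub_mul, add_mul, mul_add,
    mul_sub, expI_mul_expI, neg_add]
  module

lemma opCos_add [CompleteSpace A] (s t : ℝ) (G : A) :
    opCos (s + t) G = opCos s G * opCos t G - opSin s G * opSin t G := by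
  simp only [opSin_eq_expI, opCos_eq_expI, smul_mul_smul_comm, sub_mul, add_mul, mul_add,
    mul_sub, expI_mul_expI, neg_add]
  match_scalars <;> field_simp <;> simp [Complex.I_sq] <;> ring

lemma Commute.expI_right {B G : A} (hBG : Commute B G) (t : ℝ) : Commute B (expI G t) :=
  (hBG.smul_right _).exp_right

lemma Commute.opCos_right {B G : A} (hBG : Commute B G) (t : ℝ) : Commute B (opCos t G) := by
  rw [opCos_eq_expI]
  exact ((hBG.expI_right t).add_right (hBG.expI_right (-t))).smul_right _

lemma Commute.opSin_right {B G : A} (hBG : Commute B G) (t : ℝ) : Commute B (opSin t G) := by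
  rw [opSin_eq_expI]
  exact ((hBG.expI_right t).sub_right (hBG.expI_right (-t))).smul_right _

@[fun_prop]
lemma continuous_expI [CompleteSpace A] (G : A) : Continuous fun t => expI G t :=
  let : NormedAlgebra ℚ A := .restrictScalars ℚ ℂ A
  NormedSpace.exp_continuous.comp
    ((Complex.continuous_ofReal.mul continuous_const).smul continuous_const)

@[fun_prop]
lemma continuous_opCos [CompleteSpace A] (G : A) : Continuous fun t : ℝ => opCos t G := by
  simp only [opCos_eq_expI]
  fun_prop

@[fun_prop]
lemma continuous_opSin [CompleteSpace A] (G : A) : Continuous fun t : ℝ => opSin t G := by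
  simp only [opSin_eq_expI]
  fun_prop

lemma mul_opSin_add [CompleteSpace A] {B G : A} (hBG : Commute B G) (s t : ℝ) :
    B * opSin (s + t) G = opCos s G * (B * opSin t G) + B * (opSin s G * opCos t G) := by
  rw [opSin_add, mul_add, add_comm, ← mul_assoc, ← mul_assoc, (hBG.opCos_right s).eq, mul_assoc]

lemma opCos_add_of_mul_eq_one [CompleteSpace A] {B G : A} (hGB : G * B = 1) (s t : ℝ) :
    opCos (s + t) G = -(G * (opSin s G * (B * opSin t G))) + opCos s G * opCos t G := by
  rw [opCos_add, ← mul_assoc, ((Commute.refl G).opSin_right s).eq, mul_assoc, ← mul_assoc G,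
    hGB, one_mul, neg_add_eq_sub]

end OperatorTrigonometry

section DiscreteDuhamel

open intervalIntegral

variable {E : Type*} [NormedAddCommGroup E] [NormedSpace ℂ E]

lemma duhamel_step_sub (P Q : E →L[ℂ] E) {F : ℝ → E →L[ℂ] E} (hF : Continuous F)
    {u v : ℝ → E} (hu : Continuous u) (hv : Continuous v) (a a' b b' : E) (h : ℝ) :
    (P a + Q b + ∫ τ in (0:ℝ)..h, F τ (u τ)) - (P a' + Q b' + ∫ τ in (0:ℝ)..h, F τ (v τ)) =
      P (a - a') + Q (b - b') + ∫ τ in (0:ℝ)..h, F τ (u τ - v τ) := by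
  simp only [map_sub]
  rw [integral_sub (Continuous.intervalIntegrable (by fun_prop) _ _)
    (Continuous.intervalIntegrable (by fun_prop) _ _)]
  abel

variable [CompleteSpace E] {G Ginv : E →L[ℂ] E}

lemma opCos_integral_add_inv_opSin_integral (hc : Commute Ginv G) {w : ℝ → E}
    (hw : Continuous w) (s t a b : ℝ) :
    opCos s G (∫ τ in a..b, Ginv (opSin (t - τ) G (w τ))) +
        Ginv (opSin s G (∫ τ in a..b, opCos (t - τ) G (w τ))) =
      ∫ τ in a..b, Ginv (opSin (s + t - τ) G (w τ)) := by
  have hS : Continuous fun τ => Ginv (opSin (t - τ) G (w τ)) := by fun_prop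
  have hC : Continuous fun τ => opCos (t - τ) G (w τ) := by fun_prop
  rw [← mul_apply_eq_comp Ginv (opSin s G),
    ← (opCos s G).intervalIntegral_comp_comm (hS.intervalIntegrable a b),
    ← (Ginv * opSin s G).intervalIntegral_comp_comm (hC.intervalIntegrable a b),
    ← integral_add (Continuous.intervalIntegrable (by fun_prop) a b)
      (Continuous.intervalIntegrable (by fun_prop) a b)]
  refine integral_congr fun τ _ => ?_
  simp only [add_sub_assoc, ← mul_apply_eq_comp, mul_opSin_add hc s (t - τ)]
  rfl

lemma neg_opSin_integral_add_opCos_integral (hGGinv : G * Ginv = 1) {w : ℝ → E}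
    (hw : Continuous w) (s t a b : ℝ) :
    -(G (opSin s G (∫ τ in a..b, Ginv (opSin (t - τ) G (w τ))))) +
        opCos s G (∫ τ in a..b, opCos (t - τ) G (w τ)) =
      ∫ τ in a..b, opCos (s + t - τ) G (w τ) := by
  have hS : Continuous fun τ => Ginv (opSin (t - τ) G (w τ)) := by fun_prop
  have hC : Continuous fun τ => opCos (t - τ) G (w τ) := by fun_prop
  rw [← mul_apply_eq_comp G (opSin s G),
    ← (G * opSin s G).intervalIntegral_comp_comm (hS.intervalIntegrable a b),
    ← (opCos s G).intervalIntegral_comp_comm (hC.intervalIntegrable a b), ← integral_neg,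
    ← integral_add (Continuous.intervalIntegrable (by fun_prop) a b)
      (Continuous.intervalIntegrable (by fun_prop) a b)]
  refine integral_congr fun τ _ => ?_
  simp only [add_sub_assoc, opCos_add_of_mul_eq_one hGGinv s (t - τ)]
  rfl

theorem discrete_duhamel (hGGinv : G * Ginv = 1) (hGinvG : Ginv * G = 1) (h : ℝ) (K : ℕ)
    {w : ℕ → ℝ → E} (hw : ∀ l, Continuous (w l)) {e e' : ℕ → E} (he : e 0 = 0) (he' : e' 0 = 0)
    (hrec : ∀ k < K, e (k + 1) = opCos h G (e k) + Ginv (opSin h G (e' k)) +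
        ∫ τ in (0:ℝ)..h, Ginv (opSin (h - τ) G (w k τ)))
    (hrec' : ∀ k < K, e' (k + 1) = -(G (opSin h G (e k))) + opCos h G (e' k) +
        ∫ τ in (0:ℝ)..h, opCos (h - τ) G (w k τ)) :
    ∀ k ≤ K,
      e k = ∑ l ∈ Finset.range k,
          ∫ τ in (0:ℝ)..h, Ginv (opSin (((k : ℝ) - l) * h - τ) G (w l τ)) ∧
      e' k = ∑ l ∈ Finset.range k,
          ∫ τ in (0:ℝ)..h, opCos (((k : ℝ) - l) * h - τ) G (w l τ) := by
  have hc : Commute Ginv G := hGinvG.trans hGGinv.symm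
  have hshift (k l : ℕ) : h + ((k : ℝ) - l) * h = ((k + 1 : ℕ) - l : ℝ) * h := by push_cast; ring
  have hlast (k : ℕ) : (((k + 1 : ℕ) : ℝ) - k) * h = h := by push_cast; ring
  intro k
  induction k with
  | zero => simp [he, he']
  | succ k ih =>
    intro hk
    obtain ⟨H, H'⟩ := ih (by omega)
    constructor
    · rw [hrec k hk, H, H', map_sum, map_sum, map_sum, ← Finset.sum_add_distrib,
        Finset.sum_range_succ, hlast]
      congr 2 with l
      rw [opCos_integral_add_inv_opSin_integral hc (hw l), hshift]
    · rw [hrec' k hk, H, H', map_sum, map_sum, map_sum, ← Finset.sum_neg_distrib,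
        ← Finset.sum_add_distrib, Finset.sum_range_succ, hlast]
      congr 2 with l
      rw [neg_opSin_integral_add_opCos_integral hGGinv (hw l), hshift]

end DiscreteDuhamel

section Xi3

variable {V : Type*} [AddCommGroup V] [Module ℝ V]

/-- The polynomial in `τ` that `Ξ³` substitutes for `ψ(t_l + τ)` in the integrals of step `l`. -/
noncomputable def xi3Extrapolant (ψ₀ φ₀ σ₀ : V) (Ψ Ψ' : ℕ → V) (h : ℝ) (l : ℕ) (τ : ℝ) : V :=
  if l = 0 then ψ₀ + τ • φ₀ + (τ ^ 2 / 2) • σ₀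
  else Ψ l + τ • Ψ' l + (τ ^ 2 / (2 * h)) • (Ψ' l - Ψ' (l - 1))

lemma continuous_xi3Extrapolant [TopologicalSpace V] [ContinuousAdd V] [ContinuousSMul ℝ V]
    (ψ₀ φ₀ σ₀ : V) (Ψ Ψ' : ℕ → V) (h : ℝ) (l : ℕ) :
    Continuous (xi3Extrapolant ψ₀ φ₀ σ₀ Ψ Ψ' h l) := by
  unfold xi3Extrapolant
  split_ifs <;> fun_prop

lemma sub_xi3Extrapolant (ψ φ σ : ℝ → V) (Ψ Ψ' : ℕ → V) (t₀ h : ℝ) (hΨ0 : Ψ 0 = ψ t₀)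
    (hΨ'0 : Ψ' 0 = φ t₀) (l : ℕ) (τ : ℝ) :
    ψ (t₀ + l * h + τ) - xi3Extrapolant (ψ t₀) (φ t₀) (σ t₀) Ψ Ψ' h l τ =
      (ψ (t₀ + l * h) - Ψ l) +
        (τ * (1 + τ / (2 * h))) • (φ (t₀ + l * h) - Ψ' l) -
        (τ ^ 2 / (2 * h)) • (φ (t₀ + (l - 1 : ℕ) * h) - Ψ' (l - 1)) +
        (τ ^ 2 / 2) •
          (if l = 0 then (0 : V) else
            σ (t₀ + l * h) - h⁻¹ • (φ (t₀ + l * h) - φ (t₀ + ((l : ℝ) - 1) * h))) +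
        (ψ (t₀ + l * h + τ) - ψ (t₀ + l * h) - τ • φ (t₀ + l * h) -
          (τ ^ 2 / 2) • σ (t₀ + l * h)) := by
  rcases l with _ | l
  -- at `l = 0` the index `l - 1` truncates to `0`, and `φ t₀ - Ψ' 0 = 0`
  · simp [xi3Extrapolant, hΨ0, hΨ'0]
    abel
  · simp only [xi3Extrapolant, add_tsub_cancel_right, Nat.cast_succ, if_neg l.succ_ne_zero]
    match_scalars <;> ring

end Xi3

theorem global_error_representation_general
    {E : Type*} [NormedAddCommGroup E] [NormedSpace ℂ E] [CompleteSpace E]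
    (G Ginv : E →L[ℂ] E) (hGr : G * Ginv = 1) (hGl : Ginv * G = 1)
    (t₀ h : ℝ) (K : ℕ)
    (m : ℝ → (E →L[ℂ] E)) (hm : Continuous m)
    (ψ φ σ : ℝ → E)
    (hdψ : ∀ t : ℝ, HasDerivAt ψ (φ t) t)
    -- one-step Duhamel relations for the exact solution
    (hstepψ : ∀ k : ℕ, k ≤ K - 1 →
      ψ (t₀ + ((k : ℝ) + 1) * h) =
        opCos h G (ψ (t₀ + k * h)) + Ginv (opSin h G (φ (t₀ + k * h))) +
          ∫ τ in (0:ℝ)..h,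
            Ginv (opSin (h - τ) G (m (t₀ + k * h + τ) (ψ (t₀ + k * h + τ)))))
    (hstepφ : ∀ k : ℕ, k ≤ K - 1 →
      φ (t₀ + ((k : ℝ) + 1) * h) =
        -(G (opSin h G (ψ (t₀ + k * h)))) + opCos h G (φ (t₀ + k * h)) +
          ∫ τ in (0:ℝ)..h,
            opCos (h - τ) G (m (t₀ + k * h + τ) (ψ (t₀ + k * h + τ))))
    -- the numerical scheme Ξ³ started from the exact data
    (Ψ Ψ' : ℕ → E) (hΨ0 : Ψ 0 = ψ t₀) (hΨ'0 : Ψ' 0 = φ t₀)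
    (hΨ1 : Ψ 1 = opCos h G (ψ t₀) + Ginv (opSin h G (φ t₀)) +
      ∫ τ in (0:ℝ)..h,
        Ginv (opSin (h - τ) G (m (t₀ + τ)
          (ψ t₀ + τ • φ t₀ + (τ ^ 2 / 2) • σ t₀))))
    (hΨ'1 : Ψ' 1 = -(G (opSin h G (ψ t₀))) + opCos h G (φ t₀) +
      ∫ τ in (0:ℝ)..h,
        opCos (h - τ) G (m (t₀ + τ)
          (ψ t₀ + τ • φ t₀ + (τ ^ 2 / 2) • σ t₀)))
    (hΨstep : ∀ k : ℕ, 1 ≤ k → k ≤ K - 1 →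
      Ψ (k + 1) = opCos h G (Ψ k) + Ginv (opSin h G (Ψ' k)) +
        ∫ τ in (0:ℝ)..h,
          Ginv (opSin (h - τ) G (m (t₀ + k * h + τ)
            (Ψ k + τ • Ψ' k + (τ ^ 2 / (2 * h)) • (Ψ' k - Ψ' (k - 1))))))
    (hΨ'step : ∀ k : ℕ, 1 ≤ k → k ≤ K - 1 →
      Ψ' (k + 1) = -(G (opSin h G (Ψ k))) + opCos h G (Ψ' k) +
        ∫ τ in (0:ℝ)..h,
          opCos (h - τ) G (m (t₀ + k * h + τ)
            (Ψ k + τ • Ψ' k + (τ ^ 2 / (2 * h)) • (Ψ' k - Ψ' (k - 1))))) :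
    ∀ k : ℕ, 1 ≤ k → k ≤ K →
      (ψ (t₀ + k * h) - Ψ k =
        ∑ l ∈ Finset.range k,
          ∫ τ in (0:ℝ)..h,
            Ginv (opSin (((k : ℝ) - l) * h - τ) G
              (m (t₀ + l * h + τ)
                ((ψ (t₀ + l * h) - Ψ l) +
                  (τ * (1 + τ / (2 * h))) • (φ (t₀ + l * h) - Ψ' l) -
                  (τ ^ 2 / (2 * h)) • (φ (t₀ + (l - 1 : ℕ) * h) - Ψ' (l - 1)) +
                  (τ ^ 2 / 2) •
                    (if l = 0 then (0 : E) else
                      σ (t₀ + l * h) - h⁻¹ • (φ (t₀ + l * h) - φ (t₀ + ((l : ℝ) - 1) * h))) +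
                  (ψ (t₀ + l * h + τ) - ψ (t₀ + l * h) - τ • φ (t₀ + l * h) -
                    (τ ^ 2 / 2) • σ (t₀ + l * h)))))) ∧
      (φ (t₀ + k * h) - Ψ' k =
        ∑ l ∈ Finset.range k,
          ∫ τ in (0:ℝ)..h,
            opCos (((k : ℝ) - l) * h - τ) G
              (m (t₀ + l * h + τ)
                ((ψ (t₀ + l * h) - Ψ l) +
                  (τ * (1 + τ / (2 * h))) • (φ (t₀ + l * h) - Ψ' l) -
                  (τ ^ 2 / (2 * h)) • (φ (t₀ + (l - 1 : ℕ) * h) - Ψ' (l - 1)) +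
                  (τ ^ 2 / 2) •
                    (if l = 0 then (0 : E) else
                      σ (t₀ + l * h) - h⁻¹ • (φ (t₀ + l * h) - φ (t₀ + ((l : ℝ) - 1) * h))) +
                  (ψ (t₀ + l * h + τ) - ψ (t₀ + l * h) - τ • φ (t₀ + l * h) -
                    (τ ^ 2 / 2) • σ (t₀ + l * h))))) := by
  rintro k - hk
  have hψ : Continuous ψ := continuous_iff_continuousAt.2 fun t => (hdψ t).continuousAt
  set p := xi3Extrapolant (ψ t₀) (φ t₀) (σ t₀) Ψ Ψ' h
  have hscheme : ∀ l < K,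
      Ψ (l + 1) = opCos h G (Ψ l) + Ginv (opSin h G (Ψ' l)) +
        ∫ τ in (0:ℝ)..h, Ginv (opSin (h - τ) G (m (t₀ + l * h + τ) (p l τ))) ∧
      Ψ' (l + 1) = -(G (opSin h G (Ψ l))) + opCos h G (Ψ' l) +
        ∫ τ in (0:ℝ)..h, opCos (h - τ) G (m (t₀ + l * h + τ) (p l τ)) := by
    rintro (_ | l) hl
    · simp only [p, xi3Extrapolant, if_pos, Nat.cast_zero, zero_mul, add_zero, hΨ0, hΨ'0]
      exact ⟨hΨ1, hΨ'1⟩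
    · simp only [p, xi3Extrapolant, if_neg l.succ_ne_zero]
      exact ⟨hΨstep (l + 1) (by omega) (by omega), hΨ'step (l + 1) (by omega) (by omega)⟩
  have hp (l : ℕ) : Continuous (p l) := continuous_xi3Extrapolant _ _ _ _ _ _ _
  refine discrete_duhamel hGr hGl h K (e := fun k => ψ (t₀ + k * h) - Ψ k)
    (e' := fun k => φ (t₀ + k * h) - Ψ' k) ?_ ?_ ?_ (fun l hl => ?_) (fun l hl => ?_) k hk
  · intro l
    fun_prop
  · simp [hΨ0]
  · simp [hΨ'0]
  · rw [Nat.cast_succ, hstepψ l (by omega), (hscheme l hl).1]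
    refine (duhamel_step_sub (opCos h G) (Ginv * opSin h G)
      (F := fun τ => Ginv * opSin (h - τ) G * m (t₀ + l * h + τ)) (by fun_prop)
      (by fun_prop) (hp l) _ _ _ _ h).trans ?_
    congr 1
    refine intervalIntegral.integral_congr fun τ _ => ?_
    simp only [mul_apply_eq_comp, sub_xi3Extrapolant ψ φ σ Ψ Ψ' t₀ h hΨ0 hΨ'0, p]
  · rw [Nat.cast_succ, hstepφ l (by omega), (hscheme l hl).2]
    refine (duhamel_step_sub (-(G * opSin h G)) (opCos h G)
      (F := fun τ => opCos (h - τ) G * m (t₀ + l * h + τ)) (by fun_prop)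
      (by fun_prop) (hp l) _ _ _ _ h).trans ?_
    congr 1
    refine intervalIntegral.integral_congr fun τ _ => ?_
    simp only [mul_apply_eq_comp, sub_xi3Extrapolant ψ φ σ Ψ Ψ' t₀ h hΨ0 hΨ'0, p]

/-- **global error representation, proof of Theorem 3.2.**
With `ε k := ψ(t_k) − Ψ k`, `ε' k := φ(t_k) − Ψ' k`, the Taylor defects
`E_l(τ) := ψ(t_l+τ) − ψ(t_l) − τ φ(t_l) − (τ²/2) σ(t_l)` and
`Ē_0 := 0`, `Ē_l := σ(t_l) − (φ(t_l) − φ(t_{l−1}))/h` for `l ≥ 1`, the global errors of the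
scheme Ξ³ admit the stated sum representation for all `1 ≤ k ≤ K`.  (Note `ε'₀ = 0`, so the
convention `ε'_{−1} := 0` agrees with truncated subtraction on indices.) -/
theorem global_error_representation
    {E : Type*} [NormedAddCommGroup E] [NormedSpace ℂ E] [CompleteSpace E]
    (G Ginv : E →L[ℂ] E) (hGr : G * Ginv = 1) (hGl : Ginv * G = 1)
    (t₀ h : ℝ) (hh : 0 < h) (K : ℕ) (hK : 1 ≤ K)
    (m : ℝ → (E →L[ℂ] E)) (hm : Continuous m)
    (ψ φ σ : ℝ → E)
    (hdψ : ∀ t : ℝ, HasDerivAt ψ (φ t) t) (hdφ : ∀ t : ℝ, HasDerivAt φ (σ t) t)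
    -- one-step Duhamel relations for the exact solution
    (hstepψ : ∀ k : ℕ, k ≤ K - 1 →
      ψ (t₀ + ((k : ℝ) + 1) * h) =
        opCos h G (ψ (t₀ + k * h)) + Ginv (opSin h G (φ (t₀ + k * h))) +
          ∫ τ in (0:ℝ)..h,
            Ginv (opSin (h - τ) G (m (t₀ + k * h + τ) (ψ (t₀ + k * h + τ)))))
    (hstepφ : ∀ k : ℕ, k ≤ K - 1 →
      φ (t₀ + ((k : ℝ) + 1) * h) =
        -(G (opSin h G (ψ (t₀ + k * h)))) + opCos h G (φ (t₀ + k * h)) +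
          ∫ τ in (0:ℝ)..h,
            opCos (h - τ) G (m (t₀ + k * h + τ) (ψ (t₀ + k * h + τ))))
    -- the numerical scheme Ξ³ started from the exact data
    (Ψ Ψ' : ℕ → E) (hΨ0 : Ψ 0 = ψ t₀) (hΨ'0 : Ψ' 0 = φ t₀)
    (hΨ1 : Ψ 1 = opCos h G (ψ t₀) + Ginv (opSin h G (φ t₀)) +
      ∫ τ in (0:ℝ)..h,
        Ginv (opSin (h - τ) G (m (t₀ + τ)
          (ψ t₀ + τ • φ t₀ + (τ ^ 2 / 2) • σ t₀))))
    (hΨ'1 : Ψ' 1 = -(G (opSin h G (ψ t₀))) + opCos h G (φ t₀) +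
      ∫ τ in (0:ℝ)..h,
        opCos (h - τ) G (m (t₀ + τ)
          (ψ t₀ + τ • φ t₀ + (τ ^ 2 / 2) • σ t₀)))
    (hΨstep : ∀ k : ℕ, 1 ≤ k → k ≤ K - 1 →
      Ψ (k + 1) = opCos h G (Ψ k) + Ginv (opSin h G (Ψ' k)) +
        ∫ τ in (0:ℝ)..h,
          Ginv (opSin (h - τ) G (m (t₀ + k * h + τ)
            (Ψ k + τ • Ψ' k + (τ ^ 2 / (2 * h)) • (Ψ' k - Ψ' (k - 1))))))
    (hΨ'step : ∀ k : ℕ, 1 ≤ k → k ≤ K - 1 →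
      Ψ' (k + 1) = -(G (opSin h G (Ψ k))) + opCos h G (Ψ' k) +
        ∫ τ in (0:ℝ)..h,
          opCos (h - τ) G (m (t₀ + k * h + τ)
            (Ψ k + τ • Ψ' k + (τ ^ 2 / (2 * h)) • (Ψ' k - Ψ' (k - 1))))) :
    ∀ k : ℕ, 1 ≤ k → k ≤ K →
      (ψ (t₀ + k * h) - Ψ k =
        ∑ l ∈ Finset.range k,
          ∫ τ in (0:ℝ)..h,
            Ginv (opSin (((k : ℝ) - l) * h - τ) G
              (m (t₀ + l * h + τ)
                ((ψ (t₀ + l * h) - Ψ l) +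
                  (τ * (1 + τ / (2 * h))) • (φ (t₀ + l * h) - Ψ' l) -
                  (τ ^ 2 / (2 * h)) • (φ (t₀ + (l - 1 : ℕ) * h) - Ψ' (l - 1)) +
                  (τ ^ 2 / 2) •
                    (if l = 0 then (0 : E) else
                      σ (t₀ + l * h) - h⁻¹ • (φ (t₀ + l * h) - φ (t₀ + ((l : ℝ) - 1) * h))) +
                  (ψ (t₀ + l * h + τ) - ψ (t₀ + l * h) - τ • φ (t₀ + l * h) -
                    (τ ^ 2 / 2) • σ (t₀ + l * h)))))) ∧
      (φ (t₀ + k * h) - Ψ' k =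
        ∑ l ∈ Finset.range k,
          ∫ τ in (0:ℝ)..h,
            opCos (((k : ℝ) - l) * h - τ) G
              (m (t₀ + l * h + τ)
                ((ψ (t₀ + l * h) - Ψ l) +
                  (τ * (1 + τ / (2 * h))) • (φ (t₀ + l * h) - Ψ' l) -
                  (τ ^ 2 / (2 * h)) • (φ (t₀ + (l - 1 : ℕ) * h) - Ψ' (l - 1)) +
                  (τ ^ 2 / 2) •
                    (if l = 0 then (0 : E) else
                      σ (t₀ + l * h) - h⁻¹ • (φ (t₀ + l * h) - φ (t₀ + ((l : ℝ) - 1) * h))) +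
                  (ψ (t₀ + l * h + τ) - ψ (t₀ + l * h) - τ • φ (t₀ + l * h) -
                    (τ ^ 2 / 2) • σ (t₀ + l * h))))) :=
  global_error_representation_general G Ginv hGr hGl t₀ h K m hm ψ φ σ hdψ hstepψ hstepφ Ψ Ψ' hΨ0
    hΨ'0 hΨ1 hΨ'1 hΨstep hΨ'step
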